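/- arXiv:1705.10051 — 5 statements merged into one kernel-verified Lean document; each statement's English description precedes it below -/
import Mathlib

section
/- Assume that ρ ≥ 1 satisfies ρ(1−Δ) < 1 and that for every integer d ≥ 1 and every pair of vertices x, y of G, the number of simple paths of length d from x to y is at most ρ^d. Then for any two vertices u, v of G and any integer k ≥ 1, the probability that there exists an active path from u to v of length at least k is at most (ρ(1−Δ))^k / (1 − ρ(1−Δ)). -/
open MeasureTheory ProbabilityTheory

/-- A walk is *active* if every dart `(a,b)` it traverses has its event `X (a,b)` occurring. -/
def SimpleGraph.Walk.Active {V : Type*} {G : SimpleGraph V} {Ω : Type*}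
    (X : V × V → Set Ω) {u v : V} (p : G.Walk u v) (ω : Ω) : Prop :=
  ∀ d ∈ p.darts, ω ∈ X d.toProd

/-- if `1 ≤ ρ`, `ρ(1-Δ) < 1` and the number of simple paths of length `d`
between any two vertices is at most `ρ^d`, then the probability that there is an active
path of length at least `k` from `u` to `v` is at most `(ρ(1-Δ))^k / (1 - ρ(1-Δ))`. -/
theorem prob_active_path_length_ge_k
    {V : Type*} [Fintype V] (G : SimpleGraph V)
    {Ω : Type*} [MeasureSpace Ω] [IsProbabilityMeasure (ℙ : Measure Ω)]
    (Δ : ℝ) (hΔ0 : 0 < Δ) (hΔ2 : Δ ≤ 1 / 2)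
    (X : V × V → Set Ω)
    (hindep : iIndepSet (fun e : {q : V × V // G.Adj q.1 q.2} => X e.1) ℙ)
    (hbounds : ∀ a b : V, G.Adj a b →
      ENNReal.ofReal Δ ≤ ℙ (X (a, b)) ∧ ℙ (X (a, b)) ≤ ENNReal.ofReal (1 - Δ))
    (ρ : ℝ) (hρ1 : 1 ≤ ρ) (hρΔ : ρ * (1 - Δ) < 1)
    (hpaths : ∀ d : ℕ, 1 ≤ d → ∀ x y : V,
      (Nat.card {p : G.Walk x y // p.IsPath ∧ p.length = d} : ℝ) ≤ ρ ^ d)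
    (u v : V) (k : ℕ) (hk : 1 ≤ k) :
    ℙ {ω | ∃ p : G.Walk u v, p.IsPath ∧ k ≤ p.length ∧ p.Active X ω}
      ≤ ENNReal.ofReal ((ρ * (1 - Δ)) ^ k / (1 - ρ * (1 - Δ))) := by
  classical
  set r : ℝ := ρ * (1 - Δ) with hrdef
  have hΔ1 : (0:ℝ) < 1 - Δ := by linarith
  have hρ0 : (0:ℝ) < ρ := by linarith
  have hr0 : 0 ≤ r := by positivity
  -- per-path bound
  have hpath : ∀ (p : G.Walk u v), p.IsPath →
      ℙ {ω | p.Active X ω} ≤ ENNReal.ofReal ((1 - Δ) ^ p.length) := by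
    intro p hp
    set f : G.Dart → {q : V × V // G.Adj q.1 q.2} := fun d => ⟨d.toProd, d.adj⟩ with hf
    have hinj : Function.Injective f := by
      intro a b h
      exact SimpleGraph.Dart.ext _ _ (congrArg Subtype.val h)
    have hnd : (p.darts.map f).Nodup :=
      (SimpleGraph.Walk.darts_nodup_of_support_nodup hp.support_nodup).map hinj
    set S : Finset {q : V × V // G.Adj q.1 q.2} := (p.darts.map f).toFinset with hS
    have hcard : S.card = p.length := by
      rw [hS, List.toFinset_card_of_nodup hnd, List.length_map,
        SimpleGraph.Walk.length_darts]
    have hset : {ω | p.Active X ω} = ⋂ i ∈ S, X i.1 := by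
      ext ω
      simp only [Set.mem_setOf_eq, SimpleGraph.Walk.Active, Set.mem_iInter, hS,
        List.mem_toFinset, List.mem_map, hf]
      constructor
      · rintro h i ⟨d, hd, rfl⟩
        exact h d hd
      · intro h d hd
        exact h (f d) ⟨d, hd, rfl⟩
    rw [hset, hindep.meas_biInter S]
    calc ∏ i ∈ S, ℙ (X i.1) ≤ ∏ _i ∈ S, ENNReal.ofReal (1 - Δ) :=
          Finset.prod_le_prod' (fun i _ => (hbounds i.1.1 i.1.2 i.2).2)
      _ = ENNReal.ofReal (1 - Δ) ^ p.length := by rw [Finset.prod_const, hcard]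
      _ = ENNReal.ofReal ((1 - Δ) ^ p.length) := (ENNReal.ofReal_pow hΔ1.le _).symm
  -- per-length bound
  have hlen : ∀ d : ℕ, 1 ≤ d →
      ℙ {ω | ∃ p : G.Walk u v, p.IsPath ∧ p.length = d ∧ p.Active X ω}
        ≤ ENNReal.ofReal (r ^ d) := by
    intro d hd
    set T := {p : G.Walk u v // p.IsPath ∧ p.length = d} with hT
    haveI : Finite T := by
      refine Finite.of_injective (fun p => (⟨p.1, p.2.1⟩ : G.Path u v)) ?_
      intro a b h
      exact Subtype.ext (by simpa [Subtype.ext_iff] using h)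
    haveI : Fintype T := Fintype.ofFinite T
    have hsub : {ω | ∃ p : G.Walk u v, p.IsPath ∧ p.length = d ∧ p.Active X ω}
        ⊆ ⋃ p : T, {ω | (p.1).Active X ω} := by
      rintro ω ⟨p, hp, hl, ha⟩
      exact Set.mem_iUnion.2 ⟨⟨p, hp, hl⟩, ha⟩
    calc ℙ {ω | ∃ p : G.Walk u v, p.IsPath ∧ p.length = d ∧ p.Active X ω}
        ≤ ∑' p : T, ℙ {ω | (p.1).Active X ω} :=
          (measure_mono hsub).trans (measure_iUnion_le _)
      _ ≤ ∑' _p : T, ENNReal.ofReal ((1 - Δ) ^ d) := by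
          refine ENNReal.tsum_le_tsum fun p => ?_
          have := hpath p.1 p.2.1
          rwa [p.2.2] at this
      _ = (Nat.card T : ENNReal) * ENNReal.ofReal ((1 - Δ) ^ d) := by
          rw [tsum_eq_sum (s := Finset.univ) (by simp), Finset.sum_const,
            nsmul_eq_mul, Nat.card_eq_fintype_card, Finset.card_univ]
      _ ≤ ENNReal.ofReal (ρ ^ d) * ENNReal.ofReal ((1 - Δ) ^ d) := by
          refine mul_le_mul_left ?_ _
          rw [← ENNReal.ofReal_natCast]
          exact ENNReal.ofReal_le_ofReal (hpaths d hd u v)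
      _ = ENNReal.ofReal (r ^ d) := by
          rw [← ENNReal.ofReal_mul (by positivity), hrdef, mul_pow]
  -- main union bound
  have hsub : {ω | ∃ p : G.Walk u v, p.IsPath ∧ k ≤ p.length ∧ p.Active X ω}
      ⊆ ⋃ j : ℕ, {ω | ∃ p : G.Walk u v, p.IsPath ∧ p.length = k + j ∧ p.Active X ω} := by
    rintro ω ⟨p, hp, hkl, ha⟩
    exact Set.mem_iUnion.2 ⟨p.length - k, p, hp, by omega, ha⟩
  have hr1 : r < 1 := hρΔ
  have h1r : (0:ℝ) < 1 - r := by linarith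
  calc ℙ {ω | ∃ p : G.Walk u v, p.IsPath ∧ k ≤ p.length ∧ p.Active X ω}
      ≤ ∑' j : ℕ, ℙ {ω | ∃ p : G.Walk u v, p.IsPath ∧ p.length = k + j ∧ p.Active X ω} :=
        (measure_mono hsub).trans (measure_iUnion_le _)
    _ ≤ ∑' j : ℕ, ENNReal.ofReal (r ^ (k + j)) :=
        ENNReal.tsum_le_tsum fun j => hlen (k + j) (by omega)
    _ = ∑' j : ℕ, ENNReal.ofReal (r ^ k) * ENNReal.ofReal r ^ j := by
        refine tsum_congr fun j => ?_
        rw [pow_add, ENNReal.ofReal_mul (by positivity), ENNReal.ofReal_pow hr0,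
          ENNReal.ofReal_pow hr0]
    _ = ENNReal.ofReal (r ^ k) * (1 - ENNReal.ofReal r)⁻¹ := by
        rw [ENNReal.tsum_mul_left, ENNReal.tsum_geometric]
    _ = ENNReal.ofReal (r ^ k / (1 - r)) := by
        have h1 : (1 : ENNReal) - ENNReal.ofReal r = ENNReal.ofReal (1 - r) := by
          rw [ENNReal.ofReal_sub _ hr0, ENNReal.ofReal_one]
        rw [h1, ← ENNReal.ofReal_inv_of_pos h1r, ← ENNReal.ofReal_mul (by positivity),
          ← div_eq_mul_inv]
end

section
/- Assume that ρ satisfies 1 ≤ ρ < 1/(1−Δ), that for every integer d ≥ 1 and every pair of vertices x, y of G the number of simple paths of length d from x to y is at most ρ^d, and that the integer g satisfies g ≥ 2⌈(2 log(Δ/2) + log(1−ρ(1−Δ))) / log(ρ(1−Δ))⌉. Then for any pair of vertices u, v of G, the probability that there exists an active path from u to v of length at least g/2 is at most Δ²/4. -/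
open MeasureTheory ProbabilityTheory

lemma active_prob_le {V : Type*} {G : SimpleGraph V} {Ω : Type*} [MeasureSpace Ω]
    (X : V × V → Set Ω)
    (hindep : iIndepSet (fun e : {q : V × V // G.Adj q.1 q.2} => X e.1) ℙ)
    (Δ : ℝ)
    (hb : ∀ a b : V, G.Adj a b → ℙ (X (a, b)) ≤ ENNReal.ofReal (1 - Δ))
    {u v : V} (p : G.Walk u v) (hp : p.IsTrail) :
    ℙ {ω | p.Active X ω} ≤ ENNReal.ofReal (1 - Δ) ^ p.length := by
  classical
  set f : G.Dart → {q : V × V // G.Adj q.1 q.2} := fun d => ⟨d.toProd, d.adj⟩ with hf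
  have hfinj : Function.Injective f := by
    intro a b h
    exact SimpleGraph.Dart.ext _ _ (congrArg Subtype.val h)
  have hdarts : p.darts.Nodup := by
    have := hp.edges_nodup
    rw [SimpleGraph.Walk.edges] at this
    exact this.of_map _
  have hnodup : (p.darts.map f).Nodup := hdarts.map hfinj
  set S : Finset {q : V × V // G.Adj q.1 q.2} := (p.darts.map f).toFinset with hS
  have hcard : S.card = p.length := by
    rw [hS, List.toFinset_card_of_nodup hnodup, List.length_map,
      SimpleGraph.Walk.length_darts]
  have hev : {ω | p.Active X ω} = ⋂ i ∈ S, X i.1 := by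
    ext ω
    simp only [Set.mem_setOf_eq, SimpleGraph.Walk.Active, Set.mem_iInter, hS,
      List.mem_toFinset, List.mem_map, forall_exists_index, and_imp]
    constructor
    · rintro h i d hd rfl
      exact h d hd
    · intro h d hd
      exact h ⟨d.toProd, d.adj⟩ d hd rfl
  rw [hev, hindep.meas_biInter S]
  calc ∏ i ∈ S, ℙ (X i.1) ≤ ∏ _i ∈ S, ENNReal.ofReal (1 - Δ) := by
        apply Finset.prod_le_prod'
        intro i _
        have := hb i.1.1 i.1.2 i.2
        simpa using this
    _ = ENNReal.ofReal (1 - Δ) ^ p.length := by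
        rw [Finset.prod_const, hcard]

/-- if `1 ≤ ρ < 1/(1-Δ)`, the number of simple paths of length `d` between any
two vertices is at most `ρ^d`, and
`g ≥ 2⌈(2 log(Δ/2) + log(1-ρ(1-Δ))) / log(ρ(1-Δ))⌉` (logarithms to an arbitrary fixed
base `b > 1`), then for any vertices `u, v` the probability that there is an active path
from `u` to `v` of length at least `g/2` is at most `Δ²/4`. -/
theorem prob_active_path_length_ge_half_girth
    {V : Type*} [Fintype V] (G : SimpleGraph V)
    {Ω : Type*} [MeasureSpace Ω] [IsProbabilityMeasure (ℙ : Measure Ω)]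
    (Δ : ℝ) (hΔ0 : 0 < Δ) (hΔ2 : Δ ≤ 1 / 2)
    (X : V × V → Set Ω)
    (hindep : iIndepSet (fun e : {q : V × V // G.Adj q.1 q.2} => X e.1) ℙ)
    (hbounds : ∀ a b : V, G.Adj a b →
      ENNReal.ofReal Δ ≤ ℙ (X (a, b)) ∧ ℙ (X (a, b)) ≤ ENNReal.ofReal (1 - Δ))
    (ρ : ℝ) (hρ1 : 1 ≤ ρ) (hρΔ : ρ < 1 / (1 - Δ))
    (hpaths : ∀ d : ℕ, 1 ≤ d → ∀ x y : V,
      (Nat.card {p : G.Walk x y // p.IsPath ∧ p.length = d} : ℝ) ≤ ρ ^ d)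
    (b : ℝ) (hb : 1 < b) (g : ℕ)
    (hg : 2 * ⌈(2 * Real.logb b (Δ / 2) + Real.logb b (1 - ρ * (1 - Δ))) /
        Real.logb b (ρ * (1 - Δ))⌉ ≤ (g : ℤ))
    (u v : V) :
    ℙ {ω | ∃ p : G.Walk u v, p.IsPath ∧ g ≤ 2 * p.length ∧ p.Active X ω}
      ≤ ENNReal.ofReal (Δ ^ 2 / 4) := by
  classical
  haveI : DecidableEq V := Classical.decEq V
  haveI : DecidableRel G.Adj := Classical.decRel _
  set r : ℝ := ρ * (1 - Δ) with hr_def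
  have hΔ1 : Δ < 1 := lt_of_le_of_lt hΔ2 (by norm_num)
  have h1Δ : 0 < 1 - Δ := by linarith
  have hr0 : 0 < r := mul_pos (lt_of_lt_of_le one_pos hρ1) h1Δ
  have hr1 : r < 1 := by
    have := (lt_div_iff₀ h1Δ).mp hρΔ
    linarith
  have h1r0 : 0 < 1 - r := by linarith
  have hb0 : (0:ℝ) < b := lt_trans one_pos hb
  set c : ℝ := (2 * Real.logb b (Δ / 2) + Real.logb b (1 - r)) / Real.logb b r with hc_def
  have hlogr_neg : Real.logb b r < 0 := Real.logb_neg hb hr0 hr1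
  have hc_pos : 0 < c := by
    apply div_pos_of_neg_of_neg _ hlogr_neg
    have h1 : Real.logb b (Δ / 2) < 0 := Real.logb_neg hb (by linarith) (by linarith)
    have h2 : Real.logb b (1 - r) < 0 := Real.logb_neg hb h1r0 (by linarith)
    linarith
  -- the value of r ^ c
  have hrc : r ^ c = Δ ^ 2 / 4 * (1 - r) := by
    have h1 : r ^ c = b ^ (Real.logb b r * c) := by
      rw [Real.rpow_mul hb0.le, Real.rpow_logb hb0 (ne_of_gt hb) hr0]
    rw [h1, hc_def, mul_div_cancel₀ _ (ne_of_lt hlogr_neg)]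
    rw [Real.rpow_add hb0, mul_comm (2:ℝ), Real.rpow_mul hb0.le,
      Real.rpow_logb hb0 (ne_of_gt hb) (by linarith : (0:ℝ) < Δ / 2),
      Real.rpow_logb hb0 (ne_of_gt hb) h1r0]
    rw [show ((2:ℝ) : ℝ) = ((2:ℕ) : ℝ) by norm_num, Real.rpow_natCast]
    ring
  set k : ℕ := (g + 1) / 2 with hk_def
  have hgk : g ≤ 2 * k := by omega
  have hck : c ≤ (k : ℝ) := by
    have h1 : (⌈c⌉ : ℤ) ≤ (k : ℤ) := by omega
    calc c ≤ (⌈c⌉ : ℝ) := Int.le_ceil c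
      _ ≤ (k : ℝ) := by exact_mod_cast h1
  have hk1 : 1 ≤ k := by
    have : (1:ℤ) ≤ ⌈c⌉ := Int.ceil_pos.mpr hc_pos
    omega
  -- key numeric bound
  have key : ∀ d : ℕ, k ≤ d → r ^ d ≤ Δ ^ 2 / 4 * (1 - r) := by
    intro d hd
    have h1 : r ^ (d : ℝ) ≤ r ^ c := by
      apply Real.rpow_le_rpow_of_exponent_ge hr0 hr1.le
      exact hck.trans (by exact_mod_cast hd)
    rw [Real.rpow_natCast] at h1
    linarith [hrc]
  -- bound on fixed-length events
  set E : ℕ → Set Ω := fun d =>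
    {ω | ∃ p : G.Walk u v, p.IsPath ∧ p.length = d ∧ p.Active X ω} with hE
  have hEd : ∀ d : ℕ, 1 ≤ d → ℙ (E d) ≤ ENNReal.ofReal (r ^ d) := by
    intro d hd
    have hsub : E d ⊆
        ⋃ p : {p : G.Walk u v // p.IsPath ∧ p.length = d}, {ω | p.1.Active X ω} := by
      rintro ω ⟨p, hp, hlen, hact⟩
      exact Set.mem_iUnion.mpr ⟨⟨p, hp, hlen⟩, hact⟩
    calc ℙ (E d) ≤ ∑' p : {p : G.Walk u v // p.IsPath ∧ p.length = d},
            ℙ {ω | p.1.Active X ω} := (measure_mono hsub).trans (measure_iUnion_le _)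
      _ ≤ ∑' _p : {p : G.Walk u v // p.IsPath ∧ p.length = d},
            ENNReal.ofReal ((1 - Δ) ^ d) := by
          apply ENNReal.tsum_le_tsum
          intro p
          have := active_prob_le X hindep Δ (fun a b' hab => (hbounds a b' hab).2)
            p.1 p.2.1.isTrail
          rw [p.2.2] at this
          rwa [ENNReal.ofReal_pow h1Δ.le]
      _ = (Nat.card {p : G.Walk u v // p.IsPath ∧ p.length = d}) *
            ENNReal.ofReal ((1 - Δ) ^ d) := by
          rw [tsum_fintype, Finset.sum_const, Finset.card_univ, nsmul_eq_mul,
            Nat.card_eq_fintype_card]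
      _ ≤ ENNReal.ofReal (ρ ^ d) * ENNReal.ofReal ((1 - Δ) ^ d) := by
          apply mul_le_mul_left
          rw [← ENNReal.ofReal_natCast]
          exact ENNReal.ofReal_le_ofReal (hpaths d hd u v)
      _ = ENNReal.ofReal (r ^ d) := by
          rw [← ENNReal.ofReal_mul (by positivity), ← mul_pow]
  -- main decomposition
  have hmain : {ω | ∃ p : G.Walk u v, p.IsPath ∧ g ≤ 2 * p.length ∧ p.Active X ω}
      ⊆ ⋃ j : ℕ, E (k + j) := by
    rintro ω ⟨p, hp, hlen, hact⟩
    have hk : k ≤ p.length := by omega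
    exact Set.mem_iUnion.mpr ⟨p.length - k, p, hp, by omega, hact⟩
  have hofr1 : ENNReal.ofReal r ≤ 1 := by
    rw [show (1 : ENNReal) = ENNReal.ofReal 1 by simp]
    exact ENNReal.ofReal_le_ofReal hr1.le
  calc ℙ {ω | ∃ p : G.Walk u v, p.IsPath ∧ g ≤ 2 * p.length ∧ p.Active X ω}
      ≤ ∑' j : ℕ, ℙ (E (k + j)) := (measure_mono hmain).trans (measure_iUnion_le _)
    _ ≤ ∑' j : ℕ, ENNReal.ofReal r ^ (k + j) := by
        apply ENNReal.tsum_le_tsum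
        intro j
        refine (hEd (k + j) (by omega)).trans_eq ?_
        rw [ENNReal.ofReal_pow hr0.le]
    _ = ENNReal.ofReal r ^ k * ∑' j : ℕ, ENNReal.ofReal r ^ j := by
        rw [← ENNReal.tsum_mul_left]
        congr 1
        ext j
        rw [pow_add]
    _ = ENNReal.ofReal r ^ k * (1 - ENNReal.ofReal r)⁻¹ := by
        rw [ENNReal.tsum_geometric]
    _ ≤ ENNReal.ofReal (Δ ^ 2 / 4) := by
        have h1 : (1 : ENNReal) - ENNReal.ofReal r = ENNReal.ofReal (1 - r) := by
          rw [ENNReal.ofReal_sub _ hr0.le, ENNReal.ofReal_one]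
        rw [h1, ← div_eq_mul_inv, ENNReal.div_le_iff (by simp [hr1]) (by simp)]
        rw [← ENNReal.ofReal_pow hr0.le, ← ENNReal.ofReal_mul (by positivity)]
        exact ENNReal.ofReal_le_ofReal (key k le_rfl)
end

section
/- Assume G has no cycle of length shorter than g, where g is an even integer, that ρ satisfies 1 ≤ ρ < 1/(1−Δ), that for every integer d ≥ 1 and every pair of vertices x, y of G the number of simple paths of length d from x to y is at most ρ^d, and that g ≥ 2⌈(2 log(Δ/2) + log(1−ρ(1−Δ))) / log(ρ(1−Δ))⌉. Then for any pair of adjacent vertices u, v of G and any vertex w ∉ {u,v}, the probability that v ∈ A(u) and w ∉ A(u) is at least 7Δ²/8. -/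
open MeasureTheory ProbabilityTheory

/-- The infected set with seed `u`: `u` itself together with every vertex reachable
from `u` by an active path. -/
def SimpleGraph.infected {V : Type*} (G : SimpleGraph V) {Ω : Type*}
    (X : V × V → Set Ω) (u : V) (ω : Ω) : Set V :=
  {w | w = u ∨ ∃ p : G.Walk u w, p.IsPath ∧ p.Active X ω}

/-!
If the dart `(u, v)` is active then `v` is infected, so it suffices to bound the probability that
it is active and `w` is infected as well. Then some path `p` from `u` to `w` is active, and by
independence the dart `(u, v)` together with the other darts of `p` are all active with
probability at most `ℙ(X (u, v)) (1 - Δ)^(|p| - 1)`, with an exponent at least one because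
`w ≠ v`. By the union bound it remains to show `∑ₚ (1 - Δ)^(|p| - 1) ≤ 1 - 7Δ/8`.

At most `ρ^d` paths have length `d`, so long paths contribute a geometric tail in
`r = ρ (1 - Δ) < 1`. Two distinct paths from `u` to `w` close up a cycle, so their lengths add up
to at least `g = 2m`: at most one path is shorter than `m`, and the others are correspondingly
long. The choice of `g` gives `r^m ≤ (Δ/2)² (1 - r)`, which makes everything beyond the shortest
path negligible.
-/

open Finset SimpleGraph

theorem add_le_one_sub_of_mul_le {Δ x y : ℝ} (hΔ0 : 0 < Δ) (hΔ2 : Δ ≤ 1 / 2) (hx0 : 0 ≤ x)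
    (hx : x ≤ 1 - Δ) (hy : y ≤ 1) (hxy : x * y ≤ Δ ^ 3 / 2) :
    x + Δ ^ 2 / 2 * y ≤ 1 - 7 * Δ / 8 := by
  rcases le_or_gt x (Δ ^ 3) with hx3 | hx3
  · nlinarith
  · have hy2 : y ≤ 1 / 2 := by nlinarith
    nlinarith

theorem pow_div_two_le_of_two_mul_ceil_le {b r c : ℝ} {g : ℕ} (hb : 1 < b) (hr0 : 0 < r)
    (hr1 : r < 1) (hc : 0 < c) (hg : 2 * ⌈Real.logb b c / Real.logb b r⌉ ≤ (g : ℤ)) :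
    r ^ (g / 2) ≤ c := by
  have hceil : ⌈Real.logb b c / Real.logb b r⌉ ≤ ((g / 2 : ℕ) : ℤ) := by omega
  have hm : Real.logb b c / Real.logb b r ≤ (g / 2 : ℕ) :=
    (Int.le_ceil _).trans (by rw [← Int.cast_natCast]; exact Int.cast_le.mpr hceil)
  rw [← Real.logb_le_logb hb (by positivity) hc, Real.logb_pow]
  exact (div_le_iff_of_neg (Real.logb_neg hb hr0 hr1)).mp hm

section PathSums

variable {P : Type*} [Fintype P] {ℓ : P → ℕ} {ρ : ℝ}

theorem sum_pow_le_geom_tail {β : ℝ} (hρ : 0 ≤ ρ) (hβ : 0 ≤ β) (hρβ : ρ * β < 1)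
    (hℓ : ∀ p, 1 ≤ ℓ p) (hcount : ∀ d, 1 ≤ d → (#{p | ℓ p = d} : ℝ) ≤ ρ ^ d)
    {s : Finset P} {k : ℕ} (hk : ∀ p ∈ s, k ≤ ℓ p) :
    ∑ p ∈ s, β ^ ℓ p ≤ (ρ * β) ^ k / (1 - ρ * β) := by
  classical
  calc ∑ p ∈ s, β ^ ℓ p = ∑ d ∈ s.image ℓ, #{p ∈ s | ℓ p = d} • β ^ d := sum_comp _ _
    _ ≤ ∑ d ∈ s.image ℓ, (ρ * β) ^ d := by
        gcongr with d hd
        obtain ⟨p, -, rfl⟩ := mem_image.mp hd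
        rw [nsmul_eq_mul, mul_pow]
        gcongr
        exact (Nat.cast_le.mpr (card_le_card (filter_subset_filter _ (subset_univ s)))).trans
          (hcount _ (hℓ p))
    _ ≤ ∑ d ∈ Ico k (s.sup ℓ + 1), (ρ * β) ^ d := by
        refine sum_le_sum_of_subset_of_nonneg (fun d hd ↦ ?_) (fun _ _ _ ↦ by positivity)
        obtain ⟨p, hp, rfl⟩ := mem_image.mp hd
        exact mem_Ico.mpr ⟨hk p hp, Nat.lt_succ_of_le (le_sup hp)⟩
    _ ≤ (ρ * β) ^ k / (1 - ρ * β) := geom_sum_Ico_le_of_lt_one (by positivity) hρβ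

theorem sum_pow_le_two_mul_geom_tail {s : P → ℕ} {β : ℝ} (hρ : 0 ≤ ρ) (hβ : 1 / 2 ≤ β)
    (hβ1 : β ≤ 1) (hρβ : ρ * β < 1) (hℓ : ∀ p, 1 ≤ ℓ p)
    (hcount : ∀ d, 1 ≤ d → (#{p | ℓ p = d} : ℝ) ≤ ρ ^ d) (hsℓ : ∀ p, ℓ p ≤ s p + 1)
    {t : Finset P} {k : ℕ} (hk : ∀ p ∈ t, k ≤ ℓ p) :
    ∑ p ∈ t, β ^ s p ≤ 2 * ((ρ * β) ^ k / (1 - ρ * β)) := by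
  have hterm : ∀ p, β ^ s p ≤ 2 * β ^ ℓ p := fun p ↦
    calc β ^ s p ≤ 2 * (β ^ s p * β) := by nlinarith [pow_nonneg (by linarith : (0 : ℝ) ≤ β) (s p)]
      _ = 2 * β ^ (s p + 1) := by ring
      _ ≤ 2 * β ^ ℓ p := by
          gcongr 2 * ?_
          exact pow_le_pow_of_le_one (by linarith) hβ1 (hsℓ p)
  calc ∑ p ∈ t, β ^ s p ≤ 2 * ∑ p ∈ t, β ^ ℓ p := by
        rw [mul_sum]
        exact sum_le_sum fun p _ ↦ hterm p
    _ ≤ 2 * ((ρ * β) ^ k / (1 - ρ * β)) := by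
        gcongr
        exact sum_pow_le_geom_tail hρ (by linarith) hρβ hℓ hcount hk

theorem sum_one_sub_pow_le {s : P → ℕ} {Δ : ℝ} {m : ℕ} (hΔ0 : 0 < Δ) (hΔ2 : Δ ≤ 1 / 2)
    (hρ1 : 1 ≤ ρ) (hr1 : ρ * (1 - Δ) < 1)
    (hm : (ρ * (1 - Δ)) ^ m ≤ (Δ / 2) ^ 2 * (1 - ρ * (1 - Δ)))
    (hℓ : ∀ p, 1 ≤ ℓ p) (hcount : ∀ d, 1 ≤ d → (#{p | ℓ p = d} : ℝ) ≤ ρ ^ d)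
    (hpair : ∀ p q, p ≠ q → 2 * m ≤ ℓ p + ℓ q) (hs : ∀ p, 1 ≤ s p) (hsℓ : ∀ p, ℓ p ≤ s p + 1) :
    ∑ p, (1 - Δ) ^ s p ≤ 1 - 7 * Δ / 8 := by
  classical
  set β := 1 - Δ with hβ_def
  set r := ρ * β with hr_def
  have hβ0 : 0 ≤ β := by linarith
  have hβr : β ≤ r := le_mul_of_one_le_left hβ0 hρ1
  have hr0 : 0 ≤ r := by linarith
  have htail : ∀ (t : Finset P) k, (∀ p ∈ t, k ≤ ℓ p) → ∑ p ∈ t, β ^ s p ≤ 2 * (r ^ k / (1 - r)) :=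
    fun _ _ ↦
      sum_pow_le_two_mul_geom_tail (by linarith) (by linarith) (by linarith) hr1 hℓ hcount hsℓ
  have hrm : 2 * (r ^ m / (1 - r)) ≤ Δ ^ 2 / 2 :=
    calc 2 * (r ^ m / (1 - r)) ≤ 2 * (Δ / 2) ^ 2 := by
          gcongr
          exact (div_le_iff₀ (by linarith)).mpr hm
      _ = Δ ^ 2 / 2 := by ring
  by_cases hshort : ∃ p₀, ℓ p₀ < m
  · obtain ⟨p₀, hp₀⟩ := hshort
    have hothers : ∑ p ∈ univ.erase p₀, β ^ s p ≤ Δ ^ 2 / 2 * r ^ (m - ℓ p₀) :=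
      calc ∑ p ∈ univ.erase p₀, β ^ s p ≤ 2 * (r ^ (m + (m - ℓ p₀)) / (1 - r)) :=
            htail _ _ fun p hp ↦ by have := hpair p p₀ (ne_of_mem_erase hp); omega
        _ = 2 * (r ^ m / (1 - r)) * r ^ (m - ℓ p₀) := by ring
        _ ≤ Δ ^ 2 / 2 * r ^ (m - ℓ p₀) := by gcongr
    have hprod : β ^ s p₀ * r ^ (m - ℓ p₀) ≤ Δ ^ 3 / 2 := by
      have : r ^ s p₀ * r ^ (m - ℓ p₀) * r ≤ Δ ^ 3 / 4 :=
        calc r ^ s p₀ * r ^ (m - ℓ p₀) * r = r ^ (s p₀ + (m - ℓ p₀) + 1) := by ring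
          _ ≤ r ^ m := pow_le_pow_of_le_one hr0 hr1.le (by have := hsℓ p₀; omega)
          _ ≤ (Δ / 2) ^ 2 * (1 - r) := hm
          _ ≤ Δ ^ 3 / 4 := by nlinarith
      have : β ^ s p₀ ≤ r ^ s p₀ := pow_le_pow_left₀ hβ0 hβr _
      nlinarith [pow_nonneg hr0 (s p₀), pow_nonneg hr0 (m - ℓ p₀),
        mul_nonneg (pow_nonneg hr0 (s p₀)) (pow_nonneg hr0 (m - ℓ p₀))]
    rw [← add_sum_erase _ _ (mem_univ p₀)]
    have := add_le_one_sub_of_mul_le hΔ0 hΔ2 (by positivity)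
      (pow_le_of_le_one hβ0 (by linarith) (by have := hs p₀; omega))
      (pow_le_one₀ hr0 hr1.le) hprod
    linarith
  · simp only [not_exists, not_lt] at hshort
    have := htail univ m fun p _ ↦ hshort p
    nlinarith

end PathSums

theorem measureReal_inter_biInter_le_mul_pow {ι Ω : Type*} [DecidableEq ι] {_ : MeasurableSpace Ω}
    {μ : Measure Ω} {Y : ι → Set Ω}
    (hY : iIndepSet Y μ) {S : Finset ι} {q : ℝ} (hq : ∀ i ∈ S, μ.real (Y i) ≤ q)
    {i₀ : ι} (hi₀ : i₀ ∉ S) :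
    μ.real (Y i₀ ∩ ⋂ i ∈ S, Y i) ≤ μ.real (Y i₀) * q ^ #S := by
  rw [← set_biInter_insert, measureReal_def, hY.meas_biInter, ENNReal.toReal_prod,
    prod_insert hi₀]
  simp only [← measureReal_def]
  gcongr
  calc ∏ i ∈ S, μ.real (Y i) ≤ ∏ _i ∈ S, q := prod_le_prod (fun _ _ ↦ measureReal_nonneg) hq
    _ = q ^ #S := prod_const q

theorem mul_one_sub_sum_pow_le_measureReal {ι Ω P : Type*} [DecidableEq ι] [Fintype P]
    {_ : MeasurableSpace Ω} {μ : Measure Ω} [IsFiniteMeasure μ] {Y : ι → Set Ω}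
    (hY : iIndepSet Y μ) {q : ℝ} (hq : ∀ i, μ.real (Y i) ≤ q) {i₀ : ι} {S : P → Finset ι}
    (hS : ∀ p, i₀ ∉ S p) {A : Set Ω} (hA : Y i₀ ⊆ A ∪ ⋃ p, ⋂ i ∈ S p, Y i) :
    μ.real (Y i₀) * (1 - ∑ p, q ^ #(S p)) ≤ μ.real A := by
  have hcover : Y i₀ ⊆ A ∪ ⋃ p, (Y i₀ ∩ ⋂ i ∈ S p, Y i) := fun ω hω ↦ by
    simpa [hω] using hA hω
  have : μ.real (Y i₀) ≤ μ.real A + μ.real (Y i₀) * ∑ p, q ^ #(S p) :=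
    calc μ.real (Y i₀) ≤ μ.real A + ∑ p, μ.real (Y i₀ ∩ ⋂ i ∈ S p, Y i) :=
          (measureReal_mono hcover).trans ((measureReal_union_le _ _).trans
            (by gcongr; exact measureReal_iUnion_fintype_le _))
      _ ≤ μ.real A + μ.real (Y i₀) * ∑ p, q ^ #(S p) := by
          rw [mul_sum]
          gcongr with p
          exact measureReal_inter_biInter_le_mul_pow hY (fun i _ ↦ hq i) (hS p)
  linarith

namespace SimpleGraph

variable {V : Type*} {G : SimpleGraph V} {u v w : V}

theorem Walk.IsPath.exists_isCycle_length_le_add {p q : G.Walk u v} (hp : p.IsPath)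
    (hq : q.IsPath) (hpq : p ≠ q) :
    ∃ (x : V) (c : G.Walk x x), c.IsCycle ∧ c.length ≤ p.length + q.length := by
  obtain ⟨x, y, p', q', hp', hq', hc⟩ := hp.exists_isCycle_of_ne hq hpq
  refine ⟨x, _, hc, ?_⟩
  rw [Walk.length_append, Walk.length_reverse]
  exact add_le_add (Walk.length_le_of_isSubwalk hp') (Walk.length_le_of_isSubwalk hq')

theorem Path.card_filter_length_eq [Fintype V] [DecidableEq V] [DecidableRel G.Adj]
    (u v : V) (d : ℕ) :
    #{p : G.Path u v | p.1.length = d} = Nat.card {p : G.Walk u v // p.IsPath ∧ p.length = d} := by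
  rw [← Fintype.card_subtype, ← Nat.card_eq_fintype_card]
  exact Nat.card_congr (Equiv.subtypeSubtypeEquivSubtypeInter (fun p : G.Walk u v ↦ p.IsPath)
    (fun p ↦ p.length = d))

theorem mem_infected_of_adj {Ω : Type*} {X : V × V → Set Ω} {ω : Ω} (h : G.Adj u v)
    (hω : ω ∈ X (u, v)) : v ∈ G.infected X u ω :=
  Or.inr ⟨.cons h .nil, by simp [h.ne], by simpa [Walk.Active] using hω⟩

variable [DecidableEq V]

theorem Walk.IsPath.length_le_card_erase_add_one {p : G.Walk u v} (hp : p.IsPath) (d : G.Dart) :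
    p.length ≤ #(p.darts.toFinset.erase d) + 1 := by
  have hcard : #p.darts.toFinset = p.length := by
    rw [List.toFinset_card_of_nodup (darts_nodup_of_support_nodup hp.support_nodup),
      length_darts]
  have := pred_card_le_card_erase (s := p.darts.toFinset) (a := d)
  omega

theorem Walk.card_darts_toFinset_erase_pos (p : G.Walk u v) (huv : u ≠ v) {d : G.Dart}
    (hd : d.snd ≠ v) : 0 < #(p.darts.toFinset.erase d) := by
  have hp := not_nil_of_ne (p := p) huv
  refine card_pos.mpr ⟨p.lastDart hp, mem_erase.mpr ⟨?_, List.mem_toFinset.mpr ?_⟩⟩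
  · rintro rfl
    exact hd rfl
  · exact lastDart_mem_darts hp

theorem subset_union_iUnion_path_of_adj {Ω : Type*} {X : V × V → Set Ω} (huv : G.Adj u v)
    (hwu : w ≠ u) :
    X (u, v) ⊆ {ω | v ∈ G.infected X u ω ∧ w ∉ G.infected X u ω} ∪
      ⋃ p : G.Path u w, ⋂ d ∈ p.1.darts.toFinset.erase ⟨(u, v), huv⟩, X d.toProd := by
  intro ω hω
  by_cases hw : w ∈ G.infected X u ω
  · obtain ⟨q, hq, hact⟩ := hw.resolve_left hwu
    exact Or.inr (Set.mem_iUnion.mpr ⟨⟨q, hq⟩, Set.mem_iInter₂.mpr fun d hd ↦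
      hact d (List.mem_toFinset.mp (mem_of_mem_erase hd))⟩)
  · exact Or.inl ⟨G.mem_infected_of_adj huv hω, hw⟩

variable [Fintype V] [DecidableRel G.Adj]

theorem sum_one_sub_pow_card_darts_erase_le {Δ ρ : ℝ} {m : ℕ} (hΔ0 : 0 < Δ) (hΔ2 : Δ ≤ 1 / 2)
    (hρ1 : 1 ≤ ρ) (hr1 : ρ * (1 - Δ) < 1)
    (hm : (ρ * (1 - Δ)) ^ m ≤ (Δ / 2) ^ 2 * (1 - ρ * (1 - Δ)))
    (hcycle : ∀ (x : V) (c : G.Walk x x), c.IsCycle → 2 * m ≤ c.length)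
    (hpaths : ∀ d, 1 ≤ d → (Nat.card {p : G.Walk u w // p.IsPath ∧ p.length = d} : ℝ) ≤ ρ ^ d)
    (huv : G.Adj u v) (hwu : w ≠ u) (hwv : w ≠ v) :
    ∑ p : G.Path u w, (1 - Δ) ^ #(p.1.darts.toFinset.erase ⟨(u, v), huv⟩) ≤ 1 - 7 * Δ / 8 := by
  refine sum_one_sub_pow_le (ℓ := fun p : G.Path u w ↦ p.1.length) hΔ0 hΔ2 hρ1 hr1 hm
    (fun p ↦ Nat.one_le_iff_ne_zero.mpr fun h ↦ hwu (Walk.eq_of_length_eq_zero h).symm)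
    (fun d hd ↦ by rw [Path.card_filter_length_eq]; exact hpaths d hd) (fun p q hpq ↦ ?_)
    (fun p ↦ p.1.card_darts_toFinset_erase_pos hwu.symm hwv.symm)
    (fun p ↦ p.2.length_le_card_erase_add_one _)
  obtain ⟨x, c, hc, hlen⟩ := p.2.exists_isCycle_length_le_add q.2 (Subtype.coe_injective.ne hpq)
  exact (hcycle x c hc).trans hlen

end SimpleGraph

theorem prob_adjacent_infected_not_w_general
    {V : Type*} [Fintype V] (G : SimpleGraph V)
    {Ω : Type*} [MeasureSpace Ω] [IsProbabilityMeasure (ℙ : Measure Ω)]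
    (Δ : ℝ) (hΔ0 : 0 < Δ) (hΔ2 : Δ ≤ 1 / 2)
    (X : V × V → Set Ω)
    (hindep : iIndepSet (fun e : {q : V × V // G.Adj q.1 q.2} => X e.1) ℙ)
    (hbounds : ∀ a b : V, G.Adj a b →
      ENNReal.ofReal Δ ≤ ℙ (X (a, b)) ∧ ℙ (X (a, b)) ≤ ENNReal.ofReal (1 - Δ))
    (g : ℕ)
    (hcycle : ∀ (x : V) (c : G.Walk x x), c.IsCycle → g ≤ c.length)
    (ρ : ℝ) (hρ1 : 1 ≤ ρ) (hρΔ : ρ < 1 / (1 - Δ))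
    (hpaths : ∀ d : ℕ, 1 ≤ d → ∀ x y : V,
      (Nat.card {p : G.Walk x y // p.IsPath ∧ p.length = d} : ℝ) ≤ ρ ^ d)
    (b : ℝ) (hb : 1 < b)
    (hg : 2 * ⌈(2 * Real.logb b (Δ / 2) + Real.logb b (1 - ρ * (1 - Δ))) /
        Real.logb b (ρ * (1 - Δ))⌉ ≤ (g : ℤ))
    (u v w : V) (huv : G.Adj u v) (hwu : w ≠ u) (hwv : w ≠ v) :
    ENNReal.ofReal (7 * Δ ^ 2 / 8)
      ≤ ℙ {ω | v ∈ G.infected X u ω ∧ w ∉ G.infected X u ω} := by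
  classical
  set μ : Measure Ω := ℙ
  have hβ0 : 0 < 1 - Δ := by linarith
  have hr1 : ρ * (1 - Δ) < 1 := by rwa [lt_div_iff₀ hβ0] at hρΔ
  have hm : (ρ * (1 - Δ)) ^ (g / 2) ≤ (Δ / 2) ^ 2 * (1 - ρ * (1 - Δ)) :=
    pow_div_two_le_of_two_mul_ceil_le hb (by positivity) hr1 (by positivity)
      (by rwa [Real.logb_mul (by positivity) (by linarith), Real.logb_pow, Nat.cast_ofNat])
  have hsum := G.sum_one_sub_pow_card_darts_erase_le hΔ0 hΔ2 hρ1 hr1 hm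
    (fun x c hc ↦ (Nat.mul_div_le g 2).trans (hcycle x c hc)) (hpaths · · u w) huv hwu hwv
  have hY : iIndepSet (fun d : G.Dart ↦ X d.toProd) μ :=
    hindep.precomp (g := fun d : G.Dart ↦ (⟨d.toProd, d.adj⟩ : {q : V × V // G.Adj q.1 q.2}))
      fun _ _ h ↦ Dart.toProd_injective (congrArg Subtype.val h)
  have hA : μ.real (X (u, v)) * _ ≤ μ.real _ := mul_one_sub_sum_pow_le_measureReal hY
    (i₀ := ⟨(u, v), huv⟩) (fun d ↦ ENNReal.toReal_le_of_le_ofReal hβ0.le (hbounds _ _ d.adj).2)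
    (fun _ ↦ notMem_erase _ _) (G.subset_union_iUnion_path_of_adj huv hwu)
  have hXuv : Δ ≤ μ.real (X (u, v)) :=
    (ENNReal.ofReal_le_iff_le_toReal (measure_ne_top _ _)).mp (hbounds u v huv).1
  refine (ENNReal.ofReal_le_iff_le_toReal (measure_ne_top _ _)).mpr (?_ : _ ≤ μ.real _)
  nlinarith

/-- under the girth / path-growth assumptions, for adjacent vertices `u, v`
and any third vertex `w`, the probability that `v` is infected but `w` is not infected
(with seed `u`) is at least `7Δ²/8`. -/
theorem prob_adjacent_infected_not_w
    {V : Type*} [Fintype V] (G : SimpleGraph V)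
    {Ω : Type*} [MeasureSpace Ω] [IsProbabilityMeasure (ℙ : Measure Ω)]
    (Δ : ℝ) (hΔ0 : 0 < Δ) (hΔ2 : Δ ≤ 1 / 2)
    (X : V × V → Set Ω)
    (hindep : iIndepSet (fun e : {q : V × V // G.Adj q.1 q.2} => X e.1) ℙ)
    (hbounds : ∀ a b : V, G.Adj a b →
      ENNReal.ofReal Δ ≤ ℙ (X (a, b)) ∧ ℙ (X (a, b)) ≤ ENNReal.ofReal (1 - Δ))
    (g : ℕ) (hgeven : Even g)
    (hcycle : ∀ (x : V) (c : G.Walk x x), c.IsCycle → g ≤ c.length)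
    (ρ : ℝ) (hρ1 : 1 ≤ ρ) (hρΔ : ρ < 1 / (1 - Δ))
    (hpaths : ∀ d : ℕ, 1 ≤ d → ∀ x y : V,
      (Nat.card {p : G.Walk x y // p.IsPath ∧ p.length = d} : ℝ) ≤ ρ ^ d)
    (b : ℝ) (hb : 1 < b)
    (hg : 2 * ⌈(2 * Real.logb b (Δ / 2) + Real.logb b (1 - ρ * (1 - Δ))) /
        Real.logb b (ρ * (1 - Δ))⌉ ≤ (g : ℤ))
    (u v w : V) (huv : G.Adj u v) (hwu : w ≠ u) (hwv : w ≠ v) :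
    ENNReal.ofReal (7 * Δ ^ 2 / 8)
      ≤ ℙ {ω | v ∈ G.infected X u ω ∧ w ∉ G.infected X u ω} :=
  prob_adjacent_infected_not_w_general G Δ hΔ0 hΔ2 X hindep hbounds g hcycle ρ hρ1 hρΔ hpaths b hb
    hg u v w huv hwu hwv
end

section
/- Assume G has no cycle of length shorter than g, where g is an even integer, that ρ satisfies 1 ≤ ρ < 1/(1−Δ), that for every integer d ≥ 1 and every pair of vertices x, y of G the number of simple paths of length d from x to y is at most ρ^d, and that g ≥ 2⌈(2 log(Δ/2) + log(1−ρ(1−Δ))) / log(ρ(1−Δ))⌉. Then for any pair of non-adjacent vertices u, v of G with graph distance 1 < d(u,v) < g/2, there exists a vertex w ∉ {u,v} such that the probability that v ∈ A(u) and w ∉ A(u) is at most Δ²/4. -/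
open MeasureTheory ProbabilityTheory

/-!
Take `w` to be the second vertex of a shortest path `p` from `u` to `v`. If `v` is infected but
`w` is not, some active path `q` from `u` to `v` avoids `w`; then `q ≠ p`, so `p ∪ q` contains a
cycle, whence `g ≤ |p| + |q|` and `|q| ≥ g - d(u,v) > g/2`. A union bound over the at most `ρ^ℓ`
paths of each length `ℓ`, each active with probability at most `(1-Δ)^ℓ` by independence, bounds
the probability by the geometric tail `(ρ(1-Δ))^L / (1 - ρ(1-Δ))` with `L = g - d(u,v)`, and the
girth condition is exactly what makes this tail at most `Δ²/4`.
-/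

open scoped ENNReal

namespace SimpleGraph

variable {V : Type*} {G : SimpleGraph V}

lemma Walk.IsSubwalk.length_le {u v u' v' : V} {p : G.Walk u v} {q : G.Walk u' v'}
    (h : p.IsSubwalk q) : p.length ≤ q.length := by
  simpa using h.darts_isInfix.length_le

lemma Walk.IsPath.egirth_le_length_add_length_of_ne {u v : V} {p q : G.Walk u v}
    (hp : p.IsPath) (hq : q.IsPath) (hpq : p ≠ q) : G.egirth ≤ p.length + q.length := by
  obtain ⟨x, y, p', q', hp', hq', hc⟩ := hp.exists_isCycle_of_ne hq hpq
  refine (egirth_le_length hc).trans ?_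
  rw [Walk.length_append, Walk.length_reverse]
  exact_mod_cast add_le_add hp'.length_le hq'.length_le

section LiveEdge

variable {Ω : Type*} {X : V × V → Set Ω}

lemma mem_infected_of_mem_support {ω : Ω} {u x w : V} {q : G.Walk u x} (hq : q.IsPath)
    (hact : q.Active X ω) (hw : w ∈ q.support) : w ∈ G.infected X u ω := by
  classical
  exact Or.inr ⟨q.takeUntil w hw, hq.takeUntil hw,
    fun d hd ↦ hact d (q.darts_takeUntil_subset_darts hw hd)⟩

variable [MeasureSpace Ω]

lemma Walk.IsTrail.measure_active_le
    (hindep : iIndepSet (fun e : {q : V × V // G.Adj q.1 q.2} => X e.1) ℙ)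
    {c : ℝ≥0∞} (hX : ∀ a b, G.Adj a b → ℙ (X (a, b)) ≤ c)
    {x y : V} {q : G.Walk x y} (hq : q.IsTrail) :
    ℙ {ω | q.Active X ω} ≤ c ^ q.length := by
  classical
  let toAdj : G.Dart ↪ {e : V × V // G.Adj e.1 e.2} :=
    ⟨fun d ↦ ⟨d.toProd, d.adj⟩, fun d₁ d₂ h ↦ Dart.ext _ _ (congrArg Subtype.val h)⟩
  let S := q.darts.toFinset.map toAdj
  have hS : S.card = q.length := by
    rw [Finset.card_map, List.toFinset_card_of_nodup (hq.edges_nodup.of_map _), length_darts]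
  have hactive : {ω | q.Active X ω} = ⋂ e ∈ S, X e.1 := by
    ext ω
    simp only [Walk.Active, Set.mem_ofPred_eq, Finset.mem_map, List.mem_toFinset,
      Set.iInter_exists, Set.biInter_and', Set.iInter_iInter_eq_right, Set.mem_iInter, S]
    rfl
  calc ℙ {ω | q.Active X ω} = ∏ e ∈ S, ℙ (X e.1) := by rw [hactive, hindep.meas_biInter S]
    _ ≤ ∏ _e ∈ S, c := Finset.prod_le_prod' fun e _ ↦ hX _ _ e.2
    _ = c ^ q.length := by rw [Finset.prod_const, hS]

variable [Fintype V] {θ ρ : ℝ} {u v : V}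

lemma measure_exists_active_path_length_eq_le
    (hindep : iIndepSet (fun e : {q : V × V // G.Adj q.1 q.2} => X e.1) ℙ) (hθ : 0 ≤ θ)
    (hX : ∀ a b, G.Adj a b → ℙ (X (a, b)) ≤ ENNReal.ofReal θ) {ℓ : ℕ}
    (hcard : (Nat.card {p : G.Walk u v // p.IsPath ∧ p.length = ℓ} : ℝ) ≤ ρ ^ ℓ) :
    ℙ {ω | ∃ q : G.Walk u v, q.IsPath ∧ q.length = ℓ ∧ q.Active X ω}
      ≤ ENNReal.ofReal ((ρ * θ) ^ ℓ) := by
  classical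
  have hunion : {ω | ∃ q : G.Walk u v, q.IsPath ∧ q.length = ℓ ∧ q.Active X ω} =
      ⋃ q : {q : G.Walk u v // q.IsPath ∧ q.length = ℓ}, {ω | q.1.Active X ω} := by
    ext ω
    simp [and_assoc]
  calc ℙ {ω | ∃ q : G.Walk u v, q.IsPath ∧ q.length = ℓ ∧ q.Active X ω}
      ≤ ∑ q : {q : G.Walk u v // q.IsPath ∧ q.length = ℓ}, ℙ {ω | q.1.Active X ω} :=
        hunion ▸ measure_iUnion_fintype_le _ _
    _ ≤ ∑ _q : {q : G.Walk u v // q.IsPath ∧ q.length = ℓ}, ENNReal.ofReal θ ^ ℓ :=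
        Finset.sum_le_sum fun q _ ↦ by
          simpa only [q.2.2] using q.2.1.isTrail.measure_active_le hindep hX
    _ = Nat.card {p : G.Walk u v // p.IsPath ∧ p.length = ℓ} * ENNReal.ofReal (θ ^ ℓ) := by
        rw [Finset.sum_const, Finset.card_univ, nsmul_eq_mul, Nat.card_eq_fintype_card,
          ENNReal.ofReal_pow hθ]
    _ ≤ ENNReal.ofReal (ρ ^ ℓ) * ENNReal.ofReal (θ ^ ℓ) := by
        gcongr
        rw [← ENNReal.ofReal_natCast]
        exact ENNReal.ofReal_le_ofReal hcard
    _ = ENNReal.ofReal ((ρ * θ) ^ ℓ) := by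
        rw [← ENNReal.ofReal_mul' (pow_nonneg hθ ℓ), mul_pow]

lemma measure_exists_active_path_length_ge_le
    (hindep : iIndepSet (fun e : {q : V × V // G.Adj q.1 q.2} => X e.1) ℙ) (hθ : 0 ≤ θ)
    (hX : ∀ a b, G.Adj a b → ℙ (X (a, b)) ≤ ENNReal.ofReal θ) (hρ : 0 ≤ ρ) (hρθ : ρ * θ < 1)
    (L : ℕ)
    (hcard : ∀ ℓ, L ≤ ℓ → (Nat.card {p : G.Walk u v // p.IsPath ∧ p.length = ℓ} : ℝ) ≤ ρ ^ ℓ) :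
    ℙ {ω | ∃ q : G.Walk u v, q.IsPath ∧ L ≤ q.length ∧ q.Active X ω}
      ≤ ENNReal.ofReal ((ρ * θ) ^ L / (1 - ρ * θ)) := by
  have hsub : {ω | ∃ q : G.Walk u v, q.IsPath ∧ L ≤ q.length ∧ q.Active X ω} ⊆
      ⋃ ℓ ∈ Finset.Ico L (Fintype.card V),
        {ω | ∃ q : G.Walk u v, q.IsPath ∧ q.length = ℓ ∧ q.Active X ω} := by
    rintro ω ⟨q, hq, hL, hact⟩
    exact Set.mem_biUnion (Finset.mem_Ico.mpr ⟨hL, hq.length_lt⟩) ⟨q, hq, rfl, hact⟩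
  calc ℙ {ω | ∃ q : G.Walk u v, q.IsPath ∧ L ≤ q.length ∧ q.Active X ω}
      ≤ ∑ ℓ ∈ Finset.Ico L (Fintype.card V), ENNReal.ofReal ((ρ * θ) ^ ℓ) :=
        (measure_mono hsub).trans <| (measure_biUnion_finset_le _ _).trans <|
          Finset.sum_le_sum fun ℓ hℓ ↦ measure_exists_active_path_length_eq_le hindep hθ hX
            (hcard ℓ (Finset.mem_Ico.mp hℓ).1)
    _ = ENNReal.ofReal (∑ ℓ ∈ Finset.Ico L (Fintype.card V), (ρ * θ) ^ ℓ) :=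
        (ENNReal.ofReal_sum_of_nonneg fun ℓ _ ↦ by positivity).symm
    _ ≤ ENNReal.ofReal ((ρ * θ) ^ L / (1 - ρ * θ)) :=
        ENNReal.ofReal_le_ofReal (geom_sum_Ico_le_of_lt_one (by positivity) hρθ)

end LiveEdge

end SimpleGraph

lemma pow_le_of_ceil_logb_div_logb_le {b r x : ℝ} {L : ℕ} (hb : 1 < b) (hr0 : 0 < r)
    (hr1 : r < 1) (hx : 0 < x) (hL : ⌈Real.logb b x / Real.logb b r⌉ ≤ L) : r ^ L ≤ x := by
  have hL' : Real.logb b x / Real.logb b r ≤ L := (Int.le_ceil _).trans (mod_cast hL)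
  rw [div_le_iff_of_neg (Real.logb_neg hb hr0 hr1), ← Real.logb_pow] at hL'
  exact (Real.logb_le_logb hb (by positivity) hx).mp hL'

lemma pow_div_one_sub_le_sq_of_ceil_le {b r ε : ℝ} {L : ℕ} (hb : 1 < b) (hr0 : 0 < r)
    (hr1 : r < 1) (hε : 0 < ε)
    (hL : ⌈(2 * Real.logb b ε + Real.logb b (1 - r)) / Real.logb b r⌉ ≤ L) :
    r ^ L / (1 - r) ≤ ε ^ 2 := by
  have h1r : 0 < 1 - r := by linarith
  have hlog : 2 * Real.logb b ε + Real.logb b (1 - r) = Real.logb b (ε ^ 2 * (1 - r)) := by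
    rw [Real.logb_mul (by positivity) h1r.ne', Real.logb_pow]
    push_cast
    ring
  rw [hlog] at hL
  rw [div_le_iff₀ h1r]
  exact pow_le_of_ceil_logb_div_logb_le hb hr0 hr1 (by positivity) hL

open SimpleGraph

theorem prob_nonadjacent_close_exists_w_general
    {V : Type*} [Fintype V] (G : SimpleGraph V)
    {Ω : Type*} [MeasureSpace Ω]
    (Δ : ℝ) (hΔ0 : 0 < Δ)
    (X : V × V → Set Ω)
    (hindep : iIndepSet (fun e : {q : V × V // G.Adj q.1 q.2} => X e.1) ℙ)
    (hbounds : ∀ a b : V, G.Adj a b →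
      ENNReal.ofReal Δ ≤ ℙ (X (a, b)) ∧ ℙ (X (a, b)) ≤ ENNReal.ofReal (1 - Δ))
    (g : ℕ)
    (hcycle : ∀ (x : V) (c : G.Walk x x), c.IsCycle → g ≤ c.length)
    (ρ : ℝ) (hρ1 : 1 ≤ ρ) (hρΔ : ρ < 1 / (1 - Δ))
    (hpaths : ∀ d : ℕ, 1 ≤ d → ∀ x y : V,
      (Nat.card {p : G.Walk x y // p.IsPath ∧ p.length = d} : ℝ) ≤ ρ ^ d)
    (b : ℝ) (hb : 1 < b)
    (hg : 2 * ⌈(2 * Real.logb b (Δ / 2) + Real.logb b (1 - ρ * (1 - Δ))) /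
        Real.logb b (ρ * (1 - Δ))⌉ ≤ (g : ℤ))
    (u v : V) (huv : ¬ G.Adj u v) (hd1 : 1 < G.dist u v) (hd2 : 2 * G.dist u v < g) :
    ∃ w : V, w ≠ u ∧ w ≠ v ∧
      ℙ {ω | v ∈ G.infected X u ω ∧ w ∉ G.infected X u ω}
        ≤ ENNReal.ofReal (Δ ^ 2 / 4) := by
  have h1Δ : 0 < 1 - Δ := by
    by_contra! h
    linarith [div_nonpos_of_nonneg_of_nonpos zero_le_one h]
  have hr1 : ρ * (1 - Δ) < 1 := (lt_div_iff₀ h1Δ).mp hρΔ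
  have hreach : G.Reachable u v := Reachable.of_dist_ne_zero (by omega)
  obtain ⟨p, hp, hplen⟩ := hreach.exists_path_of_dist
  have hpnil : ¬ p.Nil := by rw [Walk.not_nil_iff_lt_length]; omega
  refine ⟨p.snd, (p.adj_snd hpnil).ne', fun h ↦ huv (h ▸ p.adj_snd hpnil), ?_⟩
  have hsub : {ω | v ∈ G.infected X u ω ∧ p.snd ∉ G.infected X u ω} ⊆
      {ω | ∃ q : G.Walk u v, q.IsPath ∧ g - G.dist u v ≤ q.length ∧ q.Active X ω} := by
    rintro ω ⟨rfl | ⟨q, hq, hact⟩, hw⟩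
    · simp at hd1
    have hpq : p ≠ q := by
      rintro rfl
      exact hw (mem_infected_of_mem_support hq hact (p.getVert_mem_support 1))
    have hgirth : (g : ℕ∞) ≤ p.length + q.length :=
      (le_egirth.mpr fun x c hc ↦ mod_cast hcycle x c hc).trans
        (hp.egirth_le_length_add_length_of_ne hq hpq)
    exact ⟨q, hq, by norm_cast at hgirth; omega, hact⟩
  calc ℙ {ω | v ∈ G.infected X u ω ∧ p.snd ∉ G.infected X u ω}
      ≤ ENNReal.ofReal ((ρ * (1 - Δ)) ^ (g - G.dist u v) / (1 - ρ * (1 - Δ))) :=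
        (measure_mono hsub).trans <| measure_exists_active_path_length_ge_le hindep h1Δ.le
          (fun a b hab ↦ (hbounds a b hab).2) (by linarith) hr1 _
          fun ℓ hℓ ↦ hpaths ℓ (by omega) u v
    _ ≤ ENNReal.ofReal (Δ ^ 2 / 4) := by
        refine ENNReal.ofReal_le_ofReal ?_
        rw [show Δ ^ 2 / 4 = (Δ / 2) ^ 2 by ring]
        exact pow_div_one_sub_le_sq_of_ceil_le hb (by positivity) hr1 (by positivity)
          (by push_cast [Nat.cast_sub (by omega : G.dist u v ≤ g)]; omega)

/-- under the girth / path-growth assumptions, for non-adjacent vertices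
`u, v` with `1 < d(u,v) < g/2`, there is a vertex `w ∉ {u,v}` such that the probability
that `v` is infected but `w` is not infected (with seed `u`) is at most `Δ²/4`. -/
theorem prob_nonadjacent_close_exists_w
    {V : Type*} [Fintype V] (G : SimpleGraph V)
    {Ω : Type*} [MeasureSpace Ω] [IsProbabilityMeasure (ℙ : Measure Ω)]
    (Δ : ℝ) (hΔ0 : 0 < Δ) (hΔ2 : Δ ≤ 1 / 2)
    (X : V × V → Set Ω)
    (hindep : iIndepSet (fun e : {q : V × V // G.Adj q.1 q.2} => X e.1) ℙ)
    (hbounds : ∀ a b : V, G.Adj a b →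
      ENNReal.ofReal Δ ≤ ℙ (X (a, b)) ∧ ℙ (X (a, b)) ≤ ENNReal.ofReal (1 - Δ))
    (g : ℕ) (hgeven : Even g)
    (hcycle : ∀ (x : V) (c : G.Walk x x), c.IsCycle → g ≤ c.length)
    (ρ : ℝ) (hρ1 : 1 ≤ ρ) (hρΔ : ρ < 1 / (1 - Δ))
    (hpaths : ∀ d : ℕ, 1 ≤ d → ∀ x y : V,
      (Nat.card {p : G.Walk x y // p.IsPath ∧ p.length = d} : ℝ) ≤ ρ ^ d)
    (b : ℝ) (hb : 1 < b)
    (hg : 2 * ⌈(2 * Real.logb b (Δ / 2) + Real.logb b (1 - ρ * (1 - Δ))) /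
        Real.logb b (ρ * (1 - Δ))⌉ ≤ (g : ℤ))
    (u v : V) (huv : ¬ G.Adj u v) (hd1 : 1 < G.dist u v) (hd2 : 2 * G.dist u v < g) :
    ∃ w : V, w ≠ u ∧ w ≠ v ∧
      ℙ {ω | v ∈ G.infected X u ω ∧ w ∉ G.infected X u ω}
        ≤ ENNReal.ofReal (Δ ^ 2 / 4) :=
  prob_nonadjacent_close_exists_w_general G Δ hΔ0 X hindep hbounds g hcycle ρ hρ1 hρΔ hpaths b hb hg
    u v huv hd1 hd2
end

section
/- Assume G has no cycle of length shorter than g, where g is an even integer, that ρ satisfies 1 ≤ ρ < 1/(1−Δ), that for every integer d ≥ 1 and every pair of vertices x, y of G the number of simple paths of length d from x to y is at most ρ^d, and that g ≥ 2⌈(2 log(Δ/2) + log(1−ρ(1−Δ))) / log(ρ(1−Δ))⌉. Then for any pair of non-adjacent vertices u, v of G with graph distance d(u,v) ≥ g/2, the probability that v ∈ A(u) is at most Δ²/4. -/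
open MeasureTheory ProbabilityTheory

/-- under the girth / path-growth assumptions, for non-adjacent vertices
`u, v` with `d(u,v) ≥ g/2`, the probability that `v` is infected (with seed `u`) is at
most `Δ²/4`. -/
theorem prob_nonadjacent_far_infected
    {V : Type*} [Fintype V] (G : SimpleGraph V)
    {Ω : Type*} [MeasureSpace Ω] [IsProbabilityMeasure (ℙ : Measure Ω)]
    (Δ : ℝ) (hΔ0 : 0 < Δ) (hΔ2 : Δ ≤ 1 / 2)
    (X : V × V → Set Ω)
    (hindep : iIndepSet (fun e : {q : V × V // G.Adj q.1 q.2} => X e.1) ℙ)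
    (hbounds : ∀ a b : V, G.Adj a b →
      ENNReal.ofReal Δ ≤ ℙ (X (a, b)) ∧ ℙ (X (a, b)) ≤ ENNReal.ofReal (1 - Δ))
    (g : ℕ) (hgeven : Even g)
    (hcycle : ∀ (x : V) (c : G.Walk x x), c.IsCycle → g ≤ c.length)
    (ρ : ℝ) (hρ1 : 1 ≤ ρ) (hρΔ : ρ < 1 / (1 - Δ))
    (hpaths : ∀ d : ℕ, 1 ≤ d → ∀ x y : V,
      (Nat.card {p : G.Walk x y // p.IsPath ∧ p.length = d} : ℝ) ≤ ρ ^ d)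
    (b : ℝ) (hb : 1 < b)
    (hg : 2 * ⌈(2 * Real.logb b (Δ / 2) + Real.logb b (1 - ρ * (1 - Δ))) /
        Real.logb b (ρ * (1 - Δ))⌉ ≤ (g : ℤ))
    (u v : V) (huv : ¬ G.Adj u v) (hd : g ≤ 2 * G.dist u v) :
    ℙ {ω | v ∈ G.infected X u ω} ≤ ENNReal.ofReal (Δ ^ 2 / 4) := by
  classical
  set q : ℝ := ρ * (1 - Δ) with hqdef
  have h1Δ : (0:ℝ) < 1 - Δ := by linarith
  have hq0 : 0 < q := mul_pos (lt_of_lt_of_le one_pos hρ1) h1Δ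
  have hq1 : q < 1 := by
    have := (lt_div_iff₀ h1Δ).mp hρΔ
    linarith
  have h1q : (0:ℝ) < 1 - q := by linarith
  -- logb facts
  have hΔh0 : (0:ℝ) < Δ / 2 := by linarith
  have hΔh1 : Δ / 2 < 1 := by linarith
  have hnum : 2 * Real.logb b (Δ / 2) + Real.logb b (1 - q) < 0 := by
    have h1 := Real.logb_neg hb hΔh0 hΔh1
    have h2 := Real.logb_neg hb h1q (by linarith)
    linarith
  have hden : Real.logb b q < 0 := Real.logb_neg hb hq0 hq1
  set r : ℝ := (2 * Real.logb b (Δ / 2) + Real.logb b (1 - q)) / Real.logb b q with hrdef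
  have hr0 : 0 < r := div_pos_of_neg_of_neg hnum hden
  -- k = g / 2
  obtain ⟨k, hk⟩ := hgeven
  have hgk : g = 2 * k := by omega
  have hceil1 : (1:ℤ) ≤ ⌈r⌉ := Int.ceil_pos.mpr hr0
  have hk1 : 1 ≤ k := by
    have : (2:ℤ) ≤ (g:ℤ) := le_trans (by omega) hg
    omega
  have hrk : r ≤ (k:ℝ) := by
    have h2k : ⌈r⌉ ≤ (k:ℤ) := by
      rw [hgk] at hg; push_cast at hg; omega
    have := Int.ceil_le.mp h2k
    exact_mod_cast this
  -- key inequality: q ^ k ≤ Δ^2/4 * (1 - q)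
  have hkey : q ^ k ≤ Δ ^ 2 / 4 * (1 - q) := by
    have hmul : (k:ℝ) * Real.logb b q ≤ r * Real.logb b q :=
      mul_le_mul_of_nonpos_right hrk hden.le
    have hrmul : r * Real.logb b q
        = 2 * Real.logb b (Δ / 2) + Real.logb b (1 - q) :=
      div_mul_cancel₀ _ hden.ne
    have hq_pow : Real.logb b (q ^ k) = (k:ℝ) * Real.logb b q := Real.logb_pow b q k
    have htarget : Real.logb b ((Δ / 2) ^ 2 * (1 - q))
        = 2 * Real.logb b (Δ / 2) + Real.logb b (1 - q) := by
      rw [Real.logb_mul (by positivity) h1q.ne', Real.logb_pow]; norm_num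
    have hle : Real.logb b (q ^ k) ≤ Real.logb b ((Δ / 2) ^ 2 * (1 - q)) := by
      rw [hq_pow, htarget]; linarith [hmul, hrmul]
    have := (Real.logb_le_logb hb (pow_pos hq0 k) (by positivity)).mp hle
    calc q ^ k ≤ (Δ / 2) ^ 2 * (1 - q) := this
      _ = Δ ^ 2 / 4 * (1 - q) := by ring
  -- distance facts
  have hkd : k ≤ G.dist u v := by omega
  have hvu : v ≠ u := by
    intro h
    subst h
    rw [SimpleGraph.dist_self] at hkd
    omega
  -- single-path probability bound
  have hone : ∀ p : G.Path u v,
      ℙ {ω | p.1.Active X ω} ≤ ENNReal.ofReal ((1 - Δ) ^ p.1.length) := by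
    intro p
    set s : Finset {e : V × V // G.Adj e.1 e.2} :=
      (p.1.darts.map fun d => (⟨d.toProd, d.adj⟩ : {e : V × V // G.Adj e.1 e.2})).toFinset
      with hsdef
    have hset : {ω | p.1.Active X ω} = ⋂ i ∈ s, X i.1 := by
      ext ω
      simp only [Set.mem_setOf_eq, Set.mem_iInter, hsdef, List.mem_toFinset, List.mem_map,
        SimpleGraph.Walk.Active]
      constructor
      · rintro h i ⟨d, hd, rfl⟩; exact h d hd
      · intro h d hd; exact h ⟨d.toProd, d.adj⟩ ⟨d, hd, rfl⟩
    have hnodup : (p.1.darts.map fun d =>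
        (⟨d.toProd, d.adj⟩ : {e : V × V // G.Adj e.1 e.2})).Nodup := by
      refine List.Nodup.map ?_
        (SimpleGraph.Walk.darts_nodup_of_support_nodup p.2.support_nodup)
      intro d d' h
      exact SimpleGraph.Dart.toProd_injective (congrArg Subtype.val h)
    have hcard : s.card = p.1.length := by
      rw [hsdef, List.toFinset_card_of_nodup hnodup, List.length_map,
        SimpleGraph.Walk.length_darts]
    rw [hset, hindep.meas_biInter s]
    calc ∏ i ∈ s, ℙ (X i.1) ≤ ∏ _i ∈ s, ENNReal.ofReal (1 - Δ) := by
          refine Finset.prod_le_prod' (fun i _ => ?_)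
          have := (hbounds i.1.1 i.1.2 i.2).2
          simpa using this
      _ = ENNReal.ofReal (1 - Δ) ^ s.card := Finset.prod_const _
      _ = ENNReal.ofReal ((1 - Δ) ^ p.1.length) := by
          rw [hcard, ← ENNReal.ofReal_pow h1Δ.le]
  -- real-valued sum bound
  have hreal : ∑ p : G.Path u v, (1 - Δ) ^ p.1.length ≤ Δ ^ 2 / 4 := by
    have hmaps : ∀ p : G.Path u v, p ∈ Finset.univ →
        p.1.length ∈ Finset.Ico k (Fintype.card V) := by
      intro p _
      rw [Finset.mem_Ico]
      exact ⟨le_trans hkd (SimpleGraph.dist_le p.1), p.2.length_lt⟩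
    rw [← Finset.sum_fiberwise_of_maps_to' hmaps (fun d => (1 - Δ) ^ d)]
    have hstep : ∀ d ∈ Finset.Ico k (Fintype.card V),
        (∑ _p ∈ Finset.univ.filter (fun p : G.Path u v => p.1.length = d),
          (1 - Δ) ^ d) ≤ q ^ d := by
      intro d hd
      have hdk : k ≤ d := (Finset.mem_Ico.mp hd).1
      rw [Finset.sum_const, nsmul_eq_mul]
      have hcount : ((Finset.univ.filter fun p : G.Path u v => p.1.length = d).card : ℝ)
          ≤ ρ ^ d := by
        have e1 : (Finset.univ.filter fun p : G.Path u v => p.1.length = d).card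
            = Fintype.card {p : G.Path u v // p.1.length = d} :=
          (Fintype.card_subtype _).symm
        have e2 : Nat.card {p : G.Path u v // p.1.length = d}
            = Nat.card {p : G.Walk u v // p.IsPath ∧ p.length = d} :=
          Nat.card_congr (Equiv.subtypeSubtypeEquivSubtypeInter
            (fun p : G.Walk u v => p.IsPath) (fun p => p.length = d))
        have e3 : (Finset.univ.filter fun p : G.Path u v => p.1.length = d).card
            = Nat.card {p : G.Walk u v // p.IsPath ∧ p.length = d} := by
          rw [e1, ← Nat.card_eq_fintype_card, e2]
        rw [e3]
        exact hpaths d (le_trans hk1 hdk) u v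
      calc ((Finset.univ.filter fun p : G.Path u v => p.1.length = d).card : ℝ)
            * (1 - Δ) ^ d ≤ ρ ^ d * (1 - Δ) ^ d :=
            mul_le_mul_of_nonneg_right hcount (pow_nonneg h1Δ.le d)
        _ = q ^ d := (mul_pow _ _ _).symm
    calc (∑ d ∈ Finset.Ico k (Fintype.card V),
          ∑ _p ∈ Finset.univ.filter (fun p : G.Path u v => p.1.length = d), (1 - Δ) ^ d)
        ≤ ∑ d ∈ Finset.Ico k (Fintype.card V), q ^ d := Finset.sum_le_sum hstep
      _ ≤ q ^ k / (1 - q) := geom_sum_Ico_le_of_lt_one hq0.le hq1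
      _ ≤ Δ ^ 2 / 4 := by
          rw [div_le_iff₀ h1q]
          exact hkey
  -- put everything together
  have hsub : {ω | v ∈ G.infected X u ω} ⊆ ⋃ p : G.Path u v, {ω | p.1.Active X ω} := by
    intro ω hω
    rcases hω with h | ⟨p, hp, hact⟩
    · exact absurd h hvu
    · exact Set.mem_iUnion.mpr ⟨⟨p, hp⟩, hact⟩
  calc ℙ {ω | v ∈ G.infected X u ω}
      ≤ ℙ (⋃ p : G.Path u v, {ω | p.1.Active X ω}) := measure_mono hsub
    _ ≤ ∑ p : G.Path u v, ℙ {ω | p.1.Active X ω} := measure_iUnion_fintype_le _ _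
    _ ≤ ∑ p : G.Path u v, ENNReal.ofReal ((1 - Δ) ^ p.1.length) :=
        Finset.sum_le_sum (fun p _ => hone p)
    _ = ENNReal.ofReal (∑ p : G.Path u v, (1 - Δ) ^ p.1.length) :=
        (ENNReal.ofReal_sum_of_nonneg (fun p _ => pow_nonneg h1Δ.le _)).symm
    _ ≤ ENNReal.ofReal (Δ ^ 2 / 4) := ENNReal.ofReal_le_ofReal hreal
end
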